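/- Let F = Σ_{k,l} E_{kl} ⊗ F_{kl} act on ℂ^N ⊗ V(ω_i), where V(ω_i) is a spin representation of so_N (i = 0 for N = 2n+1; i = 0 or 1 for N = 2n). Then F² = (κ/2 + 1/4)·I + κ·F, where κ = N/2 − 1. -/

import Mathlib

open scoped Matrix Kronecker BigOperators

namespace Yangian

noncomputable def idxSet (n : ℕ) (zero : Bool) : Finset ℤ :=
  if zero then Finset.Icc (-(n : ℤ)) n else (Finset.Icc (-(n : ℤ)) n).erase 0

abbrev Idx (n : ℕ) (zero : Bool) := {i : ℤ // i ∈ idxSet n zero}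

def negIdx {n : ℕ} {zero : Bool} : Idx n zero → Idx n zero :=
  fun ⟨x, hx⟩ => ⟨-x, by
    cases zero with
    | false =>
        simp only [idxSet, Bool.false_eq_true, if_false, Finset.mem_erase,
          Finset.mem_Icc] at hx ⊢
        omega
    | true =>
        simp only [idxSet, if_true, Finset.mem_Icc] at hx ⊢
        omega⟩

noncomputable def theta (sympl : Bool) (i j : ℤ) : ℂ :=
  if sympl then ((i.sign * j.sign : ℤ) : ℂ) else 1

noncomputable def E {n : ℕ} {zero : Bool} (i j : Idx n zero) :
    Matrix (Idx n zero) (Idx n zero) ℂ :=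
  Matrix.single i j 1

noncomputable def F {n : ℕ} {zero : Bool} (sympl : Bool) (i j : Idx n zero) :
    Matrix (Idx n zero) (Idx n zero) ℂ :=
  E i j - theta sympl i.1 j.1 • E (negIdx j) (negIdx i)

noncomputable def Pmat (n : ℕ) (zero : Bool) :
    Matrix (Idx n zero × Idx n zero) (Idx n zero × Idx n zero) ℂ :=
  ∑ i : Idx n zero, ∑ j : Idx n zero, E i j ⊗ₖ E j i

noncomputable def Qmat (n : ℕ) (zero sympl : Bool) :
    Matrix (Idx n zero × Idx n zero) (Idx n zero × Idx n zero) ℂ :=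
  ∑ i : Idx n zero, ∑ j : Idx n zero,
    theta sympl i.1 j.1 • (E i j ⊗ₖ E (negIdx i) (negIdx j))

noncomputable def kappa (n : ℕ) (zero sympl : Bool) : ℂ :=
  ((if zero then 2*n+1 else 2*n : ℕ) : ℂ) / 2 + (if sympl then 1 else -1)

noncomputable def Rmat (n : ℕ) (zero sympl : Bool) (ζ u : ℂ) :
    Matrix (Idx n zero × Idx n zero) (Idx n zero × Idx n zero) ℂ :=
  1 - (ζ / u) • Pmat n zero + (ζ / (u - ζ * kappa n zero sympl)) • Qmat n zero sympl


lemma negIdx_negIdx {n : ℕ} {zero : Bool} (k : Idx n zero) : negIdx (negIdx k) = k := by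
  obtain ⟨x, hx⟩ := k
  simp [negIdx]

lemma card_idx (n : ℕ) (zero : Bool) :
    Fintype.card (Idx n zero) = (if zero then 2*n+1 else 2*n : ℕ) := by
  have h1 : (Finset.Icc (-(n:ℤ)) n).card = 2*n+1 := by
    rw [Int.card_Icc]; omega
  cases zero with
  | true => simpa [idxSet] using h1
  | false =>
      have h0 : (0:ℤ) ∈ Finset.Icc (-(n:ℤ)) n := by simp
      simp only [idxSet, Bool.false_eq_true, if_false, Fintype.card_coe,
        Finset.card_erase_of_mem h0, h1]
      omega

/-- on `ℂ^N ⊗ V(ω_i)` with `V(ω_i)` a spin representation of `so_N`,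
the matrix `F = Σ E_{kl} ⊗ F_{kl}` satisfies `F² = (κ/2 + 1/4)·I + κ·F`,
`κ = N/2 − 1`.  The spin representation is realized via the Clifford algebra: `A` is
any `ℂ`-algebra with generators `γ_k` satisfying `γ_kγ_l + γ_lγ_k = 2δ_{k,-l}`, and
`F_{kl}` acts as `¼[γ_k, γ_{-l}]`; `F` is the matrix over `A` with `(k,l)` entry
`¼[γ_k, γ_{-l}]`. -/
theorem statement17 (n : ℕ) (zero : Bool) (A : Type*) [Ring A] [Algebra ℂ A]
    (γ : Idx n zero → A)
    (hγ : ∀ k l : Idx n zero,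
      γ k * γ l + γ l * γ k = if k = negIdx l then 2 else 0) :
    let Fm : Matrix (Idx n zero) (Idx n zero) A :=
      fun k l => (4:ℂ)⁻¹ • (γ k * γ (negIdx l) - γ (negIdx l) * γ k)
    Fm * Fm = (kappa n zero false / 2 + 1/4 : ℂ) •
        (1 : Matrix (Idx n zero) (Idx n zero) A)
      + kappa n zero false • Fm := by
  intro Fm
  have hinv : ∀ k : Idx n zero, negIdx (negIdx k) = k := negIdx_negIdx
  have key : ∀ k l : Idx n zero,
      γ k * γ (negIdx l) + γ (negIdx l) * γ k = if k = l then 2 else 0 := by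
    intro k l; simpa [hinv] using hγ k (negIdx l)
  -- nicer form of Fm
  have hFm : ∀ k l, Fm k l = (2:ℂ)⁻¹ • (γ k * γ (negIdx l))
      - (2:ℂ)⁻¹ • (if k = l then (1:A) else 0) := by
    intro k l
    have h1 : γ (negIdx l) * γ k = (if k = l then 2 else 0) - γ k * γ (negIdx l) :=
      eq_sub_of_add_eq (by rw [add_comm]; exact key k l)
    show (4:ℂ)⁻¹ • (γ k * γ (negIdx l) - γ (negIdx l) * γ k) = _
    rw [h1]
    have h2 : (2:A) = (2:ℂ) • (1:A) := by
      rw [two_smul]; norm_num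
    split_ifs with h
    · rw [h2]; module
    · module
  -- the sum ∑ γ(-m) γ m = N
  set N : ℕ := Fintype.card (Idx n zero) with hNdef
  have hN : ∑ m : Idx n zero, γ (negIdx m) * γ m = (N:ℂ) • (1:A) := by
    set S := ∑ m : Idx n zero, γ (negIdx m) * γ m with hS
    have h2 : ∑ m : Idx n zero, γ m * γ (negIdx m) = S := by
      rw [hS]
      have := Equiv.sum_comp (Function.Involutive.toPerm negIdx hinv)
        (fun m => γ (negIdx m) * γ m)
      have h' : ∑ m : Idx n zero, γ (negIdx (negIdx m)) * γ (negIdx m)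
          = ∑ m : Idx n zero, γ (negIdx m) * γ m := this
      simpa [hinv] using h'
    have hadd : S + S = N • (2:A) := by
      nth_rewrite 2 [← h2]
      rw [← Finset.sum_add_distrib]
      have : ∀ m : Idx n zero, γ (negIdx m) * γ m + γ m * γ (negIdx m) = 2 := by
        intro m; simpa using hγ (negIdx m) m
      simp only [this, Finset.sum_const, Finset.card_univ]
      rfl
    have h2A : (2:A) = (2:ℂ) • (1:A) := by rw [two_smul]; norm_num
    have : (2:ℂ) • S = (2:ℂ) • ((N:ℂ) • (1:A)) := by
      rw [two_smul]
      rw [hadd, h2A, ← Nat.cast_smul_eq_nsmul ℂ, smul_smul, smul_smul]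
      ring_nf
    exact smul_right_injective A two_ne_zero this
  -- entrywise computation
  ext k l
  rw [Matrix.mul_apply, Matrix.add_apply, Matrix.smul_apply, Matrix.smul_apply,
    Matrix.one_apply, hFm]
  have expand : ∀ m : Idx n zero, Fm k m * Fm m l
      = (4:ℂ)⁻¹ • (γ k * ((γ (negIdx m) * γ m) * γ (negIdx l)))
        - (4:ℂ)⁻¹ • (if m = l then γ k * γ (negIdx m) else 0)
        - ((4:ℂ)⁻¹ • (if k = m then γ m * γ (negIdx l) else 0)
          - (4:ℂ)⁻¹ • (if k = m then (if m = l then (1:A) else 0) else 0)) := by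
    intro m
    rw [hFm, hFm]
    rw [sub_mul, mul_sub, mul_sub, smul_mul_smul_comm, smul_mul_smul_comm,
      smul_mul_smul_comm, smul_mul_smul_comm]
    norm_num [mul_assoc, mul_ite, ite_mul, mul_one, one_mul, mul_zero, zero_mul]
    split_ifs <;> rfl
  rw [Finset.sum_congr rfl (fun m _ => expand m)]
  rw [Finset.sum_sub_distrib, Finset.sum_sub_distrib, Finset.sum_sub_distrib,
    ← Finset.smul_sum, ← Finset.smul_sum, ← Finset.smul_sum, ← Finset.smul_sum]
  rw [← Finset.mul_sum, ← Finset.sum_mul, hN]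
  rw [Finset.sum_ite_eq' Finset.univ l (fun m => γ k * γ (negIdx m)),
    Finset.sum_ite_eq Finset.univ k (fun m => γ m * γ (negIdx l)),
    Finset.sum_ite_eq Finset.univ k (fun m => if m = l then (1:A) else 0)]
  simp only [Finset.mem_univ, if_true]
  have hk : kappa n zero false = (N:ℂ)/2 - 1 := by
    rw [kappa, hNdef, card_idx]; simp [sub_eq_add_neg]
  rw [hk]
  rw [smul_mul_assoc, one_mul, mul_smul_comm]
  split_ifs with h
  · subst h
    match_scalars <;> field_simp <;> ring
  · match_scalars <;> field_simp <;> ring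


end Yangian
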